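/- Pinching increases the tracial geometric mean: if P ∈ M_ℓ(ℂ) is an orthogonal projection, Q = I − P, and X, Y are positive semidefinite, then tgm(X,Y) ≤ tgm(PXP, PYP) + tgm(QXQ, QYQ). -/

import Mathlib

open Matrix
open scoped ComplexOrder

/-- The square root of a positive semidefinite matrix (the definition of the older Mathlib,
since removed from Mathlib). -/
noncomputable def Matrix.PosSemidef.sqrt {𝕜 : Type*} [RCLike 𝕜] {n : Type*} [Fintype n]
    [DecidableEq n] {A : Matrix n n 𝕜} (hA : A.PosSemidef) : Matrix n n 𝕜 :=
  hA.1.eigenvectorUnitary.1 * diagonal ((↑) ∘ (√·) ∘ hA.1.eigenvalues) *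
  (star hA.1.eigenvectorUnitary : Matrix n n 𝕜)

theorem Matrix.PosSemidef.isHermitian_sqrt {𝕜 : Type*} [RCLike 𝕜] {n : Type*} [Fintype n]
    [DecidableEq n] {A : Matrix n n 𝕜} (hA : A.PosSemidef) : hA.sqrt.IsHermitian := by
  have hD : (diagonal ((↑) ∘ (√·) ∘ hA.1.eigenvalues) : Matrix n n 𝕜)ᴴ =
      diagonal ((↑) ∘ (√·) ∘ hA.1.eigenvalues) := by
    rw [diagonal_conjTranspose]
    congr 1
    funext i
    simp
  simp only [Matrix.IsHermitian, Matrix.PosSemidef.sqrt, conjTranspose_mul, hD]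
  rw [star_eq_conjTranspose, conjTranspose_conjTranspose, Matrix.mul_assoc]

/-- The product `√X * Y * √X` is positive semidefinite. -/
theorem sqrt_mul_mul_sqrt_posSemidef {n : Type*} [Fintype n] [DecidableEq n]
    {X Y : Matrix n n ℂ} (hX : X.PosSemidef) (hY : Y.PosSemidef) :
    (hX.sqrt * Y * hX.sqrt).PosSemidef := by
  have h := hY.conjTranspose_mul_mul_same (B := hX.sqrt)
  rwa [hX.isHermitian_sqrt.eq] at h

/-- The tracial geometric mean `tgm(X,Y) = trace √(√X·Y·√X)`. -/
noncomputable def tgm {n : Type*} [Fintype n] [DecidableEq n]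
    {X Y : Matrix n n ℂ} (hX : X.PosSemidef) (hY : Y.PosSemidef) : ℝ :=
  ((sqrt_mul_mul_sqrt_posSemidef hX hY).sqrt.trace).re

/-!
`tgm(X, Y)` is the trace norm `‖√Y √X‖₁ = tr √((√Y √X)ᴴ (√Y √X))`, and
`√Y √X = √Y P √X + √Y Q √X`, so the inequality is the triangle inequality for `‖·‖₁`
once `‖√Y P √X‖₁ = tgm(PXP, PYP)`. That identity holds because `‖M‖₁` depends only on `MᴴM`
and, as `‖Mᴴ‖₁ = ‖M‖₁`, only on `MMᴴ`, while `√(PXP) = P √(PXP)`. Both the triangle inequality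
and `‖Mᴴ‖₁ = ‖M‖₁` follow from `‖B‖₁ = max {Re tr (K B) : ‖K‖ ≤ 1}`, the maximum being attained
at the partial isometry `K = (BᴴB)^(-1/2) Bᴴ`.
-/

open scoped InnerProductSpace

namespace Matrix

variable {𝕜 n : Type*} [RCLike 𝕜] [Fintype n] [DecidableEq n]

theorem PosSemidef.sqrt_eq_cfc {A : Matrix n n 𝕜} (hA : A.PosSemidef) :
    hA.sqrt = cfc Real.sqrt A := by
  rw [hA.1.cfc_eq, IsHermitian.cfc, Unitary.conjStarAlgAut_apply]
  rfl

theorem PosSemidef.sqrt_mul_self {A : Matrix n n 𝕜} (hA : A.PosSemidef) :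
    hA.sqrt * hA.sqrt = A := by
  rw [hA.sqrt_eq_cfc, ← cfc_mul Real.sqrt Real.sqrt A]
  conv_rhs => rw [← cfc_id' ℝ A hA.1.isSelfAdjoint]
  refine cfc_congr fun x hx => Real.mul_self_sqrt ?_
  obtain ⟨i, rfl⟩ := hA.1.spectrum_real_eq_range_eigenvalues ▸ hx
  exact hA.eigenvalues_nonneg i

theorem PosSemidef.mul_sqrt_mul_conjTranspose {A : Matrix n n 𝕜} (hA : A.PosSemidef)
    (M N : Matrix n n 𝕜) : M * hA.sqrt * (N * hA.sqrt)ᴴ = M * A * Nᴴ := by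
  rw [conjTranspose_mul, hA.isHermitian_sqrt.eq]
  conv_rhs => rw [← hA.sqrt_mul_self]
  simp only [mul_assoc]

theorem PosSemidef.conjTranspose_sqrt_mul_mul_sqrt_mul {A : Matrix n n 𝕜} (hA : A.PosSemidef)
    (M N : Matrix n n 𝕜) : (hA.sqrt * M)ᴴ * (hA.sqrt * N) = Mᴴ * A * N := by
  rw [conjTranspose_mul, hA.isHermitian_sqrt.eq]
  conv_rhs => rw [← hA.sqrt_mul_self]
  simp only [mul_assoc]

theorem IsHermitian.mul_cfc_inv_sqrt {A : Matrix n n 𝕜} (hA : A.IsHermitian) :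
    A * cfc (fun x => (√x)⁻¹) A = cfc Real.sqrt A := by
  nth_rw 1 [← cfc_id' ℝ A hA.isSelfAdjoint]
  rw [← cfc_mul _ _ A (hg := A.finite_real_spectrum.continuousOn _)]
  exact cfc_congr fun x _ => by rw [← div_eq_mul_inv, Real.div_sqrt]

theorem PosSemidef.mul_sqrt_of_mul_eq {A P : Matrix n n 𝕜} (hA : A.PosSemidef)
    (h : P * A = A) : P * hA.sqrt = hA.sqrt := by
  rw [hA.sqrt_eq_cfc, ← hA.1.mul_cfc_inv_sqrt, ← mul_assoc, h]

theorem IsHermitian.trace_cfc {A : Matrix n n 𝕜} (hA : A.IsHermitian) (f : ℝ → ℝ) :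
    (cfc f A).trace = ∑ i, (f (hA.eigenvalues i) : 𝕜) := by
  rw [hA.cfc_eq, IsHermitian.cfc, Unitary.conjStarAlgAut_apply, trace_mul_cycle,
    Unitary.coe_star_mul_self, one_mul, trace_diagonal]
  rfl

theorem isStarProjection_cfc (A : Matrix n n 𝕜) {f : ℝ → ℝ}
    (hf : ∀ x, f x * f x = f x) : IsStarProjection (cfc f A) := by
  refine ⟨?_, IsSelfAdjoint.cfc⟩
  rw [IsIdempotentElem, ← cfc_mul _ _ A (A.finite_real_spectrum.continuousOn _)
    (A.finite_real_spectrum.continuousOn _)]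
  exact cfc_congr fun x _ => hf x

theorem trace_eq_sum_inner_toEuclideanCLM (M : Matrix n n 𝕜)
    (b : OrthonormalBasis n 𝕜 (EuclideanSpace 𝕜 n)) :
    M.trace = ∑ i, ⟪b i, toEuclideanCLM (n := n) (𝕜 := 𝕜) M (b i)⟫_𝕜 := by
  have := LinearMap.trace_eq_sum_inner (toEuclideanLin M) b
  rwa [toEuclideanLin_eq_toLin_orthonormal, trace_toLin_eq] at this

theorem IsHermitian.toEuclideanCLM_eigenvectorBasis {A : Matrix n n 𝕜} (hA : A.IsHermitian)
    (i : n) : toEuclideanCLM (n := n) (𝕜 := 𝕜) A (hA.eigenvectorBasis i) =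
      (hA.eigenvalues i : 𝕜) • hA.eigenvectorBasis i := by
  ext1
  rw [ofLp_toEuclideanCLM, hA.mulVec_eigenvectorBasis, WithLp.ofLp_smul,
    RCLike.real_smul_eq_coe_smul (K := 𝕜)]

theorem norm_toEuclideanCLM_eigenvectorBasis_conjTranspose_mul_self (B : Matrix n n 𝕜)
    (i : n) :
    ‖toEuclideanCLM (n := n) (𝕜 := 𝕜) B
        ((isHermitian_conjTranspose_mul_self B).eigenvectorBasis i)‖ =
      √((isHermitian_conjTranspose_mul_self B).eigenvalues i) := by
  set h := isHermitian_conjTranspose_mul_self B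
  set T := toEuclideanCLM (n := n) (𝕜 := 𝕜)
  set v := h.eigenvectorBasis i
  have hv : ‖v‖ = 1 := h.eigenvectorBasis.orthonormal.1 i
  have hTH : T (Bᴴ * B) v = ContinuousLinearMap.adjoint (T B) (T B v) := by
    rw [map_mul, ← star_eq_conjTranspose, map_star, ContinuousLinearMap.star_eq_adjoint]
    rfl
  rw [← Real.sqrt_sq (norm_nonneg (T B v)), @norm_sq_eq_re_inner 𝕜,
    ← ContinuousLinearMap.adjoint_inner_right, ← hTH, h.toEuclideanCLM_eigenvectorBasis,
    inner_smul_right, inner_self_eq_norm_sq_to_K, hv]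
  simp

theorem norm_toEuclideanCLM_le_one_of_isStarProjection {K : Matrix n n 𝕜}
    (hK : IsStarProjection (K * Kᴴ)) :
    ‖toEuclideanCLM (n := n) (𝕜 := 𝕜) K‖ ≤ 1 := by
  set T := toEuclideanCLM (n := n) (𝕜 := 𝕜)
  have hle := (IsStarProjection.mk (hK.isIdempotentElem.map T) (hK.isSelfAdjoint.map T)).norm_le
  have hT : T (K * Kᴴ) = T K * star (T K) := by
    rw [map_mul, ← map_star]
    rfl
  rw [hT] at hle
  have hsq : ‖T K‖ * ‖T K‖ ≤ 1 := CStarRing.norm_self_mul_star.symm.trans_le hle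
  nlinarith [norm_nonneg (T K)]

noncomputable def traceNorm (M : Matrix n n 𝕜) : ℝ :=
  RCLike.re (cfc Real.sqrt (Mᴴ * M)).trace

theorem traceNorm_eq_sum_sqrt_eigenvalues (M : Matrix n n 𝕜) :
    M.traceNorm = ∑ i, √((isHermitian_conjTranspose_mul_self M).eigenvalues i) := by
  simp [traceNorm, (isHermitian_conjTranspose_mul_self M).trace_cfc]

theorem traceNorm_eq_of_conjTranspose_mul_self_eq {M N : Matrix n n 𝕜}
    (h : Mᴴ * M = Nᴴ * N) : M.traceNorm = N.traceNorm := by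
  rw [traceNorm, traceNorm, h]

theorem re_trace_mul_le_traceNorm {K : Matrix n n 𝕜}
    (hK : ‖toEuclideanCLM (n := n) (𝕜 := 𝕜) K‖ ≤ 1) (B : Matrix n n 𝕜) :
    RCLike.re (K * B).trace ≤ B.traceNorm := by
  set h := isHermitian_conjTranspose_mul_self B
  set T := toEuclideanCLM (n := n) (𝕜 := 𝕜)
  rw [traceNorm_eq_sum_sqrt_eigenvalues, trace_eq_sum_inner_toEuclideanCLM _ h.eigenvectorBasis,
    map_sum]
  refine Finset.sum_le_sum fun i _ => ?_
  set v := h.eigenvectorBasis i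
  have hKv : ‖star (T K) v‖ ≤ 1 := by
    calc ‖star (T K) v‖ ≤ ‖star (T K)‖ * ‖v‖ := (star (T K)).le_opNorm v
      _ ≤ 1 := by
        rwa [ContinuousLinearMap.star_eq_adjoint, ContinuousLinearMap.adjoint.norm_map,
          h.eigenvectorBasis.orthonormal.1 i, mul_one]
  calc RCLike.re ⟪v, T (K * B) v⟫_𝕜 = RCLike.re ⟪star (T K) v, T B v⟫_𝕜 := by
        rw [map_mul, ContinuousLinearMap.star_eq_adjoint,
          ContinuousLinearMap.adjoint_inner_left]
        rfl
    _ ≤ ‖star (T K) v‖ * ‖T B v‖ := (RCLike.re_le_norm _).trans (norm_inner_le_norm _ _)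
    _ ≤ ‖T B v‖ := mul_le_of_le_one_left (norm_nonneg _) hKv
    _ = √(h.eigenvalues i) := norm_toEuclideanCLM_eigenvectorBasis_conjTranspose_mul_self B i

theorem exists_re_trace_mul_eq_traceNorm (B : Matrix n n 𝕜) :
    ∃ K : Matrix n n 𝕜, ‖toEuclideanCLM (n := n) (𝕜 := 𝕜) K‖ ≤ 1 ∧
      RCLike.re (K * B).trace = B.traceNorm := by
  set H := Bᴴ * B
  have hH : H.IsHermitian := isHermitian_conjTranspose_mul_self B
  -- with `(√0)⁻¹ = 0`, `K Kᴴ = F H F` is the projection onto the range of `H`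
  set F := cfc (fun x => (√x)⁻¹) H
  have hHF : H * F = cfc Real.sqrt H := hH.mul_cfc_inv_sqrt
  refine ⟨F * Bᴴ, norm_toEuclideanCLM_le_one_of_isStarProjection ?_, ?_⟩
  · have hF : Fᴴ = F := IsSelfAdjoint.cfc.star_eq
    rw [conjTranspose_mul, conjTranspose_conjTranspose, hF, mul_assoc, ← mul_assoc Bᴴ, hHF,
      ← cfc_mul _ _ H (H.finite_real_spectrum.continuousOn _)]
    refine isStarProjection_cfc H fun x => ?_
    rcases eq_or_ne (√x) 0 with hx | hx <;> simp [hx]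
  · rw [mul_assoc, trace_mul_comm, hHF]
    rfl

theorem traceNorm_add_le (A B : Matrix n n 𝕜) :
    (A + B).traceNorm ≤ A.traceNorm + B.traceNorm := by
  obtain ⟨K, hK, hKAB⟩ := exists_re_trace_mul_eq_traceNorm (A + B)
  rw [← hKAB, mul_add, trace_add, map_add]
  exact add_le_add (re_trace_mul_le_traceNorm hK A) (re_trace_mul_le_traceNorm hK B)

theorem traceNorm_conjTranspose_le (M : Matrix n n 𝕜) : Mᴴ.traceNorm ≤ M.traceNorm := by
  obtain ⟨K, hK, hKM⟩ := exists_re_trace_mul_eq_traceNorm Mᴴ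
  have hK' : ‖toEuclideanCLM (n := n) (𝕜 := 𝕜) Kᴴ‖ ≤ 1 := by
    rwa [← star_eq_conjTranspose, map_star, ContinuousLinearMap.star_eq_adjoint,
      ContinuousLinearMap.adjoint.norm_map]
  calc Mᴴ.traceNorm = RCLike.re (Kᴴ * M).trace := by
        rw [← hKM, ← conjTranspose_conjTranspose (Kᴴ * M), trace_conjTranspose,
          conjTranspose_mul, conjTranspose_conjTranspose, RCLike.star_def, RCLike.conj_re,
          trace_mul_comm]
    _ ≤ M.traceNorm := re_trace_mul_le_traceNorm hK' M

theorem traceNorm_conjTranspose (M : Matrix n n 𝕜) : Mᴴ.traceNorm = M.traceNorm :=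
  le_antisymm (traceNorm_conjTranspose_le M) (by simpa using traceNorm_conjTranspose_le Mᴴ)

theorem traceNorm_eq_of_mul_conjTranspose_eq {M N : Matrix n n 𝕜} (h : M * Mᴴ = N * Nᴴ) :
    M.traceNorm = N.traceNorm := by
  rw [← traceNorm_conjTranspose M, ← traceNorm_conjTranspose N, traceNorm, traceNorm,
    conjTranspose_conjTranspose, conjTranspose_conjTranspose, h]

end Matrix

theorem tgm_eq_traceNorm {n : Type*} [Fintype n] [DecidableEq n] {X Y : Matrix n n ℂ}
    (hX : X.PosSemidef) (hY : Y.PosSemidef) :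
    tgm hX hY = (hY.sqrt * hX.sqrt).traceNorm := by
  have h : hX.sqrt * Y * hX.sqrt = (hY.sqrt * hX.sqrt)ᴴ * (hY.sqrt * hX.sqrt) := by
    calc hX.sqrt * Y * hX.sqrt = hX.sqrt * (hY.sqrt * hY.sqrt) * hX.sqrt := by
          rw [hY.sqrt_mul_self]
      _ = _ := by
          rw [conjTranspose_mul, hX.isHermitian_sqrt.eq, hY.isHermitian_sqrt.eq]
          noncomm_ring
  rw [tgm, traceNorm, (sqrt_mul_mul_sqrt_posSemidef hX hY).sqrt_eq_cfc, h]
  rfl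

theorem traceNorm_sqrt_mul_mul_sqrt_eq_tgm {n : Type*} [Fintype n] [DecidableEq n]
    {X Y P : Matrix n n ℂ} (hX : X.PosSemidef) (hY : Y.PosSemidef) (hP : IsStarProjection P) :
    (hY.sqrt * P * hX.sqrt).traceNorm =
      tgm (hX.conjTranspose_mul_mul_same P) (hY.conjTranspose_mul_mul_same P) := by
  set hX' := hX.conjTranspose_mul_mul_same P
  set hY' := hY.conjTranspose_mul_mul_same P
  have hPh : Pᴴ = P := hP.isSelfAdjoint.star_eq
  have hPX' : P * hX'.sqrt = hX'.sqrt :=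
    hX'.mul_sqrt_of_mul_eq (by rw [hPh, ← mul_assoc, ← mul_assoc, hP.isIdempotentElem.eq])
  rw [tgm_eq_traceNorm]
  calc (hY.sqrt * P * hX.sqrt).traceNorm = (hY.sqrt * hX'.sqrt).traceNorm := by
        refine traceNorm_eq_of_mul_conjTranspose_eq ?_
        rw [hX.mul_sqrt_mul_conjTranspose, hX'.mul_sqrt_mul_conjTranspose, conjTranspose_mul, hPh]
        simp only [mul_assoc]
    _ = (hY'.sqrt * hX'.sqrt).traceNorm := by
        refine traceNorm_eq_of_conjTranspose_mul_self_eq ?_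
        rw [hY.conjTranspose_sqrt_mul_mul_sqrt_mul, hY'.conjTranspose_sqrt_mul_mul_sqrt_mul,
          show hX'.sqrtᴴ * (Pᴴ * Y * P) * hX'.sqrt = (P * hX'.sqrt)ᴴ * Y * (P * hX'.sqrt) by
            simp only [conjTranspose_mul, mul_assoc], hPX']

/-- Pinching increases the tracial geometric mean: for an orthogonal projection `P`
and `Q = I − P`, `tgm(X,Y) ≤ tgm(PXP, PYP) + tgm(QXQ, QYQ)`. -/
theorem tgm_le_pinching {ℓ : ℕ} {X Y : Matrix (Fin ℓ) (Fin ℓ) ℂ}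
    (hX : X.PosSemidef) (hY : Y.PosSemidef)
    {P : Matrix (Fin ℓ) (Fin ℓ) ℂ} (hP2 : P * P = P) (hPh : Pᴴ = P) :
    tgm hX hY ≤
      tgm (hX.conjTranspose_mul_mul_same P) (hY.conjTranspose_mul_mul_same P) +
      tgm (hX.conjTranspose_mul_mul_same (1 - P)) (hY.conjTranspose_mul_mul_same (1 - P)) := by
  have hP : IsStarProjection P := ⟨hP2, hPh⟩
  rw [tgm_eq_traceNorm, ← traceNorm_sqrt_mul_mul_sqrt_eq_tgm hX hY hP,
    ← traceNorm_sqrt_mul_mul_sqrt_eq_tgm hX hY hP.one_sub]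
  calc (hY.sqrt * hX.sqrt).traceNorm
      = (hY.sqrt * P * hX.sqrt + hY.sqrt * (1 - P) * hX.sqrt).traceNorm := by
        congr 1
        noncomm_ring
    _ ≤ _ := traceNorm_add_le _ _
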